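/- For every σ ∈ R and every ordinal α, σ ∈ H_0(ψ_σ α). -/

import Mathlib

open Ordinal Set

noncomputable section

/-- A cardinal is weakly inaccessible: uncountable, regular, and a limit cardinal. -/
def WeaklyInaccessible (c : Cardinal) : Prop :=
  Cardinal.aleph0 < c ∧ c.IsRegular ∧ ∀ x < c, Order.succ x < c

/-- `I` is (the initial ordinal of) the least weakly inaccessible cardinal. -/
def I : Ordinal := (sInf {c : Cardinal | WeaklyInaccessible c}).ord

/-- `Om α` is `Ω_α`: `0` for `α = 0` and the initial ordinal of `ℵ_α` otherwise. -/
def Om (α : Ordinal) : Ordinal := if α = 0 then 0 else (Cardinal.aleph α).ord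

/-- `R = {Ω_{μ+1} : μ < I} ∪ {I}`. -/
def R : Set Ordinal := {o | (∃ μ < I, o = Om (μ + 1)) ∨ o = I}

/-- Given the family of hulls at earlier stages, the collapse `ψ_σ`. -/
def psiOf (F : Set Ordinal → Set Ordinal) (σ : Ordinal) : Ordinal :=
  sInf ({β | β < σ ∧ σ ∈ F (Set.Iio β) ∧ F (Set.Iio β) ∩ Set.Iio σ ⊆ Set.Iio β} ∪ {σ})

instance : WellFoundedRelation Ordinal := ⟨(· < ·), Ordinal.lt_wf⟩

/-- `H α X` is the least set of ordinals containing `X ∪ {0, I}` and closed under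
ordinal addition, `β ↦ ω^β`, `β ↦ Ω_β`, and `(σ, β) ↦ ψ_σ β` for `σ ∈ R` and `β < α`. -/
def H (α : Ordinal) (X : Set Ordinal) : Set Ordinal :=
  ⋂₀ {Y : Set Ordinal | X ∪ {0, I} ⊆ Y ∧
      (∀ γ ∈ Y, ∀ δ ∈ Y, γ + δ ∈ Y) ∧
      (∀ γ ∈ Y, Ordinal.omega0 ^ γ ∈ Y) ∧
      (∀ γ ∈ Y, Om γ ∈ Y) ∧
      (∀ σ ∈ R, ∀ β ∈ Y, β < α → σ ∈ Y → psiOf (H β) σ ∈ Y)}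
termination_by α
decreasing_by assumption

/-- The collapsing function `ψ_σ α`. -/
def psi (σ α : Ordinal) : Ordinal := psiOf (H α) σ

/-- The relation `δ₀ ≪ δ₁ {η}`. -/
def llr (η δ₀ δ₁ : Ordinal) : Prop :=
  δ₀ < δ₁ ∧ ∀ σ ∈ R, ∀ α : Ordinal,
    δ₁ ∈ H α (Set.Iio (psi σ α)) → η ∈ H α (Set.Iio (psi σ α)) → δ₀ ∈ H α (Set.Iio (psi σ α))

/-!
For `σ = I` there is nothing to prove, and `σ = Ω_{μ+1}` lies in `H 0 (Iio (ψ_σ α))` as soon as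
`μ + 1 < ψ_σ α`. This is clear if `ψ_σ α = σ`. Otherwise `β := ψ_σ α < σ`, `σ ∈ H α (Iio β)` and
this hull meets `σ` only below `β`. But `σ` can enter a hull only as `Om (μ + 1)`: it is closed
under `+` and `ω^·`, is neither `0` nor `I`, and is no value `ψ_τ δ < τ`, since such a value is
missing from its own hull whereas `σ ∈ H δ (Iio σ)`. Hence `μ + 1` lies in the hull below `σ`,
so `μ + 1 < β`.
-/

lemma Om_zero : Om 0 = 0 := if_pos rfl

lemma Om_of_ne_zero {ν : Ordinal} (hν : ν ≠ 0) : Om ν = ω_ ν := by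
  rw [Om, if_neg hν, Cardinal.ord_aleph]

lemma Om_injective : Function.Injective Om := by
  intro a b hab
  rcases eq_or_ne a 0 with rfl | ha <;> rcases eq_or_ne b 0 with rfl | hb
  · rfl
  · rw [Om_zero, Om_of_ne_zero hb] at hab
    exact absurd hab.symm (omega_pos b).ne'
  · rw [Om_zero, Om_of_ne_zero ha] at hab
    exact absurd hab (omega_pos a).ne'
  · rw [Om_of_ne_zero ha, Om_of_ne_zero hb] at hab
    exact omega_strictMono.injective hab

lemma isPrincipal_add_Om (ν : Ordinal) : IsPrincipal (· + ·) (Om ν) := by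
  rcases eq_or_ne ν 0 with rfl | hν
  · intro a _ ha
    rw [Om_zero] at ha
    exact (not_lt_zero ha).elim
  · rw [Om_of_ne_zero hν]
    exact isPrincipal_add_omega ν

lemma omega0_opow_lt_Om {ν γ : Ordinal} (hγ : γ < Om ν) : ω ^ γ < Om ν := by
  rcases eq_or_ne ν 0 with rfl | hν
  · rw [Om_zero] at hγ
    exact (not_lt_zero hγ).elim
  · rw [Om_of_ne_zero hν] at hγ ⊢
    have hω : ω < ω_ ν := omega_zero ▸ omega_strictMono (pos_iff_ne_zero.2 hν)
    exact isPrincipal_opow_omega ν hω hγ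

lemma lt_Om_add_one (μ : Ordinal) : μ + 1 < Om (μ + 1) := by
  rw [Om_of_ne_zero (by simp), ← Order.succ_eq_add_one]
  exact (Cardinal.isSuccLimit_omega _).succ_lt
    ((le_omega_self μ).trans_lt (omega_strictMono (Order.lt_succ μ)))

lemma not_weaklyInaccessible_succ (x : Cardinal) : ¬ WeaklyInaccessible (Order.succ x) :=
  fun h => lt_irrefl _ (h.2.2 x (Order.lt_succ x))

lemma Om_add_one_ne_I (μ : Ordinal) : Om (μ + 1) ≠ I := by
  intro h
  rw [Om, if_neg (by simp), ← Cardinal.succ_aleph, I] at h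
  replace h := Cardinal.ord_injective h
  rcases Set.eq_empty_or_nonempty {c : Cardinal | WeaklyInaccessible c} with hS | hS
  · rw [hS, Cardinal.sInf_empty] at h
    exact (Order.succ_ne_bot _) h
  · exact not_weaklyInaccessible_succ _ (h ▸ csInf_mem hS)

lemma psiOf_eq_self_or (F : Set Ordinal → Set Ordinal) (σ : Ordinal) :
    psiOf F σ = σ ∨ (psiOf F σ < σ ∧ σ ∈ F (Iio (psiOf F σ)) ∧
      F (Iio (psiOf F σ)) ∩ Iio σ ⊆ Iio (psiOf F σ)) :=
  (csInf_mem (⟨σ, Or.inr rfl⟩ : Set.Nonempty (_ ∪ {σ}))).symm.imp Set.mem_singleton_iff.1 id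

def IsHullClosed (α : Ordinal) (X Y : Set Ordinal) : Prop :=
  X ∪ {0, I} ⊆ Y ∧
    (∀ γ ∈ Y, ∀ δ ∈ Y, γ + δ ∈ Y) ∧
    (∀ γ ∈ Y, ω ^ γ ∈ Y) ∧
    (∀ γ ∈ Y, Om γ ∈ Y) ∧
    (∀ σ ∈ R, ∀ β ∈ Y, β < α → σ ∈ Y → psiOf (H β) σ ∈ Y)

lemma H_eq_sInter (α : Ordinal) (X : Set Ordinal) : H α X = ⋂₀ {Y | IsHullClosed α X Y} := by
  rw [H]; rfl

section Hull

variable {α : Ordinal} {X : Set Ordinal}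

lemma isHullClosed_H : IsHullClosed α X (H α X) := by
  rw [H_eq_sInter]
  refine ⟨fun x hx => mem_sInter.2 fun Y hY => hY.1 hx,
    fun γ hγ δ hδ => mem_sInter.2 fun Y hY => hY.2.1 γ (hγ Y hY) δ (hδ Y hY),
    fun γ hγ => mem_sInter.2 fun Y hY => hY.2.2.1 γ (hγ Y hY),
    fun γ hγ => mem_sInter.2 fun Y hY => hY.2.2.2.1 γ (hγ Y hY),
    fun σ hσ β hβ hβα hσm => mem_sInter.2 fun Y hY =>
      hY.2.2.2.2 σ hσ β (hβ Y hY) hβα (hσm Y hY)⟩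

lemma subset_H : X ⊆ H α X := fun _ hx => isHullClosed_H.1 (Or.inl hx)

lemma I_mem_H : I ∈ H α X := isHullClosed_H.1 (Or.inr (Or.inr rfl))

lemma Om_mem_H {γ : Ordinal} (hγ : γ ∈ H α X) : Om γ ∈ H α X := isHullClosed_H.2.2.2.1 γ hγ

lemma H_induction {P : Ordinal → Prop} (base : ∀ x ∈ X ∪ {0, I}, P x)
    (add : ∀ γ ∈ H α X, ∀ δ ∈ H α X, P γ → P δ → P (γ + δ))
    (opow : ∀ γ ∈ H α X, P γ → P (ω ^ γ))
    (om : ∀ γ ∈ H α X, P γ → P (Om γ))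
    (psi : ∀ σ ∈ R, ∀ β ∈ H α X, β < α → σ ∈ H α X → P σ → P (psiOf (H β) σ)) :
    ∀ x ∈ H α X, P x := by
  have hY : IsHullClosed α X (H α X ∩ {x | P x}) := by
    obtain ⟨hbase, hadd, hopow, hom, hpsi⟩ := isHullClosed_H (α := α) (X := X)
    refine ⟨fun x hx => ⟨hbase hx, base x hx⟩, ?_, ?_, ?_, ?_⟩
    · exact fun γ hγ δ hδ => ⟨hadd γ hγ.1 δ hδ.1, add γ hγ.1 δ hδ.1 hγ.2 hδ.2⟩
    · exact fun γ hγ => ⟨hopow γ hγ.1, opow γ hγ.1 hγ.2⟩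
    · exact fun γ hγ => ⟨hom γ hγ.1, om γ hγ.1 hγ.2⟩
    · exact fun σ hσ β hβ hβα hσY =>
        ⟨hpsi σ hσ β hβ.1 hβα hσY.1, psi σ hσ β hβ.1 hβα hσY.1 hσY.2⟩
  intro x hx
  rw [H_eq_sInter] at hx
  exact (sInter_subset_of_mem hY hx).2

end Hull

lemma lt_of_Om_mem_H {ν β α : Ordinal} (hν : ν < Om ν) (hI : Om ν ≠ I) (hβ : β < Om ν)
    (hmem : Om ν ∈ H α (Iio β)) (hsub : H α (Iio β) ∩ Iio (Om ν) ⊆ Iio β) : ν < β := by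
  refine H_induction (P := fun x => x = Om ν → ν < β) ?_ ?_ ?_ ?_ ?_ _ hmem rfl
  · rintro x (hx | rfl | rfl) hx_eq
    · exact absurd (hx_eq ▸ hx : Om ν < β) (lt_asymm hβ)
    · rw [← hx_eq] at hν
      exact (not_lt_zero hν).elim
    · exact absurd hx_eq.symm hI
  · intro γ _ δ _ hγ hδ hsum
    have hγ_le : γ ≤ Om ν := hsum ▸ le_self_add
    have hδ_le : δ ≤ Om ν := hsum ▸ le_add_self
    rcases hγ_le.lt_or_eq with hγ_lt | rfl
    · rcases hδ_le.lt_or_eq with hδ_lt | rfl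
      · exact absurd hsum (isPrincipal_add_Om ν hγ_lt hδ_lt).ne
      · exact hδ rfl
    · exact hγ rfl
  · intro γ _ hγ hpow
    rcases (hpow ▸ right_le_opow γ one_lt_omega0 : γ ≤ Om ν).lt_or_eq with hγ_lt | rfl
    · exact absurd hpow (omega0_opow_lt_Om hγ_lt).ne
    · exact hγ rfl
  · intro γ hγH _ hOm
    obtain rfl := Om_injective hOm
    exact hsub ⟨hγH, hν⟩
  · intro τ _ δ _ _ _ hτ hψ
    rcases psiOf_eq_self_or (H δ) τ with hτψ | ⟨hψτ, -, htrap⟩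
    · exact hτ (hτψ ▸ hψ)
    · rw [hψ] at hψτ htrap
      have hself : Om ν ∈ H δ (Iio (Om ν)) := Om_mem_H (subset_H hν)
      exact (mem_Iio.1 (htrap ⟨hself, hψτ⟩)).false.elim

theorem stmt3_general :
    ∀ σ ∈ R, ∀ α : Ordinal, σ ∈ H 0 (Set.Iio (psi σ α)) := by
  rintro σ (⟨μ, -, rfl⟩ | rfl) α
  · refine Om_mem_H (subset_H ?_)
    rcases psiOf_eq_self_or (H α) (Om (μ + 1)) with hψ | ⟨hψ_lt, hmem, htrap⟩
    · rw [mem_Iio, psi, hψ]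
      exact lt_Om_add_one μ
    · exact lt_of_Om_mem_H (lt_Om_add_one μ) (Om_add_one_ne_I μ) hψ_lt hmem htrap
  · exact I_mem_H

theorem stmt3 (hex : ∃ c : Cardinal, WeaklyInaccessible c) :
    ∀ σ ∈ R, ∀ α : Ordinal, σ ∈ H 0 (Set.Iio (psi σ α)) :=
  stmt3_general

end
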